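/- Let G be a connected graph, s,t nonadjacent vertices, and A ⊆ V(G)∖{s,t} with G[{s}∪A] connected and ({s}∪A) ∩ N_G[t] = ∅. Then there exists exactly one minimal s,t-separator S of G that is close to sA, i.e., A ⊆ C_s(G−S) and for every other minimal s,t-separator T with A ⊆ C_s(G−T) it holds that C_s(G−T) ⊄ C_s(G−S) (equivalently C_s(G−T) is not a subset of C_s(G−S)). -/

import Mathlib

variable {V : Type*}

/-- Reachability in `G` by a walk avoiding the vertex set `S`. -/
def ReachAvoid (G : SimpleGraph V) (S : Set V) (u v : V) : Prop :=
  ∃ w : G.Walk u v, ∀ x ∈ w.support, x ∉ S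

/-- The connected component of `G − S` containing `s`, as a subset of `V`. -/
def compOf (G : SimpleGraph V) (S : Set V) (s : V) : Set V :=
  {v | ReachAvoid G S s v}

/-- `S` is an `s,t`-separator of `G`. -/
def IsSep (G : SimpleGraph V) (s t : V) (S : Set V) : Prop :=
  s ∉ S ∧ t ∉ S ∧ ¬ ReachAvoid G S s t

/-- `S` is a minimal `s,t`-separator of `G`. -/
def IsMinSep (G : SimpleGraph V) (s t : V) (S : Set V) : Prop :=
  IsSep G s t S ∧ ∀ S' ⊂ S, ¬ IsSep G s t S'

/-- The open neighborhood of a vertex set `X`. -/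
def nbhd (G : SimpleGraph V) (X : Set V) : Set V :=
  {v | v ∉ X ∧ ∃ x ∈ X, G.Adj x v}

/-- The closed neighborhood of a vertex `v`. -/
def clNbhd (G : SimpleGraph V) (v : V) : Set V :=
  insert v (G.neighborSet v)

/-- `S` is a minimal `s,t`-separator close to `sA`. -/
def CloseTo (G : SimpleGraph V) (s t : V) (A : Set V) (S : Set V) : Prop :=
  IsMinSep G s t S ∧ A ⊆ compOf G S s ∧
    ∀ T, IsMinSep G s t T → T ≠ S → A ⊆ compOf G T s →
      ¬ compOf G T s ⊆ compOf G S s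

/-- `G` contains no asteroidal triple. -/
def IsATFree (G : SimpleGraph V) : Prop :=
  ¬ ∃ a b c : V, a ≠ b ∧ a ≠ c ∧ b ≠ c ∧
    ¬ G.Adj a b ∧ ¬ G.Adj a c ∧ ¬ G.Adj b c ∧
    (∃ w : G.Walk a b, ∀ x ∈ w.support, x ∉ clNbhd G c) ∧
    (∃ w : G.Walk a c, ∀ x ∈ w.support, x ∉ clNbhd G b) ∧
    (∃ w : G.Walk b c, ∀ x ∈ w.support, x ∉ clNbhd G a)

/-- `S` is an `A,B`-separator. -/
def IsABSep (G : SimpleGraph V) (A B : Set V) (S : Set V) : Prop :=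
  S ⊆ (A ∪ B)ᶜ ∧ ∀ a ∈ A, ∀ b ∈ B, ¬ ReachAvoid G S a b

/-- `S` is a minimal `A,B`-separator. -/
def IsMinABSep (G : SimpleGraph V) (A B S : Set V) : Prop :=
  IsABSep G A B S ∧ ∀ S' ⊂ S, ¬ IsABSep G A B S'

/-- `S` is a safe (connectivity-preserving) `A,B`-separator: removing `S`
leaves two distinct components, one containing `A` and one containing `B`. -/
def IsSafeSep (G : SimpleGraph V) (A B S : Set V) : Prop :=
  S ⊆ (A ∪ B)ᶜ ∧ ∃ a b : V, a ∉ S ∧ b ∉ S ∧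
    A ⊆ compOf G S a ∧ B ⊆ compOf G S b ∧
    Disjoint (compOf G S a) (compOf G S b)

/-- The induced subgraph on `X` is connected (any two vertices of `X` are joined
by a walk staying in `X`). -/
def ConnIn (G : SimpleGraph V) (X : Set V) : Prop :=
  ∀ x ∈ X, ∀ y ∈ X, ∃ w : G.Walk x y, ∀ z ∈ w.support, z ∈ X

/-- The graph obtained from `G` by contracting `{s} ∪ A` to the vertex `s`
(the vertices of `A` become isolated). -/
def contractGraph (G : SimpleGraph V) (s : V) (A : Set V) : SimpleGraph V where
  Adj u v := u ∉ A ∧ v ∉ A ∧ u ≠ v ∧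
    (G.Adj u v ∨ (u = s ∧ ∃ a ∈ A, G.Adj a v) ∨ (v = s ∧ ∃ a ∈ A, G.Adj a u))
  symm := by
    constructor
    rintro u v ⟨hu, hv, hne, h⟩
    refine ⟨hv, hu, hne.symm, ?_⟩
    rcases h with h | h | h
    · exact Or.inl h.symm
    · exact Or.inr (Or.inr h)
    · exact Or.inr (Or.inl h)
  loopless := by
    constructor
    rintro u ⟨_, _, hne, _⟩
    exact hne rfl

/-- The graph obtained from `G` by adding all edges from `s` to `N_G[A]`. -/
def addApex (G : SimpleGraph V) (s : V) (A : Set V) : SimpleGraph V where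
  Adj u v := G.Adj u v ∨
    (u = s ∧ v ≠ s ∧ v ∈ A ∪ nbhd G A) ∨
    (v = s ∧ u ≠ s ∧ u ∈ A ∪ nbhd G A)
  symm := by
    constructor
    rintro u v (h | h | h)
    · exact Or.inl h.symm
    · exact Or.inr (Or.inr h)
    · exact Or.inr (Or.inl h)
  loopless := by
    constructor
    rintro u (h | ⟨h1, h2, _⟩ | ⟨h1, h2, _⟩)
    · exact G.loopless.irrefl u h
    · exact h2 h1
    · exact h2 h1

/-- The graph obtained from `G` by subdividing every edge. -/
def subdiv (G : SimpleGraph V) : SimpleGraph (V ⊕ G.edgeSet) where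
  Adj x y :=
    match x, y with
    | Sum.inl u, Sum.inr e => u ∈ (e : Sym2 V)
    | Sum.inr e, Sum.inl u => u ∈ (e : Sym2 V)
    | _, _ => False
  symm := by
    constructor
    rintro (u | e) (v | f) h <;> exact h
  loopless := by
    constructor
    rintro (u | e) h <;> exact h

/-- The instance `2Dis(G,A,B)` of 2-Disjoint-Connected-Subgraphs has a solution. -/
def TwoDisSolvable (G : SimpleGraph V) (A B : Set V) : Prop :=
  ∃ A₁ B₁ : Set V, Disjoint A₁ B₁ ∧ A ⊆ A₁ ∧ B ⊆ B₁ ∧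
    ConnIn G A₁ ∧ ConnIn G B₁

/-! Let `X = {s} ∪ A` and let `D` be the component of `t` in `G − N(X)`. Then `S = N(D)` is a
minimal `s,t`-separator: every vertex of `S` has neighbours both in `D` and in `X`, and `X` is
connected. For any minimal separator `T` with `X ⊆ C_s(G − T)`, the vertices of `S ∖ T` lie in
`C_s(G − T)` (they are adjacent to `X`), which forces `C_s(G − S) ⊆ C_s(G − T)`. So `S` has the
least `s`-component among all candidates, and a minimal separator is determined by its
`s`-component, being its neighbourhood. -/

open SimpleGraph

section Separators

variable {G : SimpleGraph V} {S T C X : Set V} {s t u v w : V}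

lemma ReachAvoid.refl (h : u ∉ S) : ReachAvoid G S u u :=
  ⟨.nil, by simpa using h⟩

lemma ReachAvoid.symm (h : ReachAvoid G S u v) : ReachAvoid G S v u := by
  obtain ⟨p, hp⟩ := h
  exact ⟨p.reverse, fun x hx => hp x (by simpa using hx)⟩

lemma ReachAvoid.trans (h₁ : ReachAvoid G S u v) (h₂ : ReachAvoid G S v w) :
    ReachAvoid G S u w := by
  obtain ⟨p, hp⟩ := h₁
  obtain ⟨q, hq⟩ := h₂
  exact ⟨p.append q, fun x hx => ((Walk.mem_support_append_iff _ _).1 hx).elim (hp x) (hq x)⟩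

lemma ReachAvoid.mono (h : ReachAvoid G S u v) (hTS : T ⊆ S) : ReachAvoid G T u v := by
  obtain ⟨p, hp⟩ := h
  exact ⟨p, fun x hx hxT => hp x hx (hTS hxT)⟩

lemma ReachAvoid.of_adj (h : G.Adj u v) (hu : u ∉ S) (hv : v ∉ S) : ReachAvoid G S u v :=
  ⟨h.toWalk, by simp [hu, hv]⟩

lemma self_mem_compOf (h : s ∉ S) : s ∈ compOf G S s :=
  ReachAvoid.refl h

lemma notMem_of_mem_compOf (h : v ∈ compOf G S s) : v ∉ S := by
  obtain ⟨p, hp⟩ := h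
  exact hp v p.end_mem_support

lemma mem_compOf_of_adj (hu : u ∈ compOf G S s) (h : G.Adj u v) (hv : v ∉ S) :
    v ∈ compOf G S s :=
  ReachAvoid.trans hu (.of_adj h (notMem_of_mem_compOf hu) hv)

lemma nbhd_compOf_subset : nbhd G (compOf G S s) ⊆ S := by
  rintro v ⟨hv, u, hu, huv⟩
  by_contra hvS
  exact hv (mem_compOf_of_adj hu huv hvS)

lemma mem_nbhd_compOf (hu : u ∈ compOf G S s) (huv : G.Adj u v) (hv : v ∈ S) :
    v ∈ nbhd G (compOf G S s) :=
  ⟨fun h => notMem_of_mem_compOf h hv, u, hu, huv⟩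

lemma compOf_anti (hTS : T ⊆ S) : compOf G S s ⊆ compOf G T s :=
  fun _ hv => ReachAvoid.mono hv hTS

lemma mem_compOf_of_mem_support (p : G.Walk s v) (hp : ∀ x ∈ p.support, x ∉ S) {x : V}
    (hx : x ∈ p.support) : x ∈ compOf G S s := by
  classical
  exact ⟨p.takeUntil x hx, fun z hz => hp z (p.support_takeUntil_subset_support hx hz)⟩

lemma compOf_subset_compOf_of_disjoint (h : Disjoint (compOf G T s) S) :
    compOf G T s ⊆ compOf G S s := by
  rintro v ⟨p, hp⟩
  exact ⟨p, fun x hx => h.notMem_of_mem_left (mem_compOf_of_mem_support p hp hx)⟩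

lemma not_reachAvoid_nbhd (hu : u ∈ C) (hv : v ∉ C) : ¬ ReachAvoid G (nbhd G C) u v := by
  rintro ⟨p, hp⟩
  obtain ⟨d, hd, hd₁, hd₂⟩ := p.exists_boundary_dart C hu hv
  exact hp d.snd (p.dart_snd_mem_support_of_mem_darts hd) ⟨hd₂, d.fst, hd₁, d.adj⟩

lemma ConnIn.subset_compOf (hX : ConnIn G X) (hs : s ∈ X) (hXS : Disjoint X S) :
    X ⊆ compOf G S s := by
  intro x hx
  obtain ⟨p, hp⟩ := hX s hs x hx
  exact ⟨p, fun z hz => hXS.notMem_of_mem_left (hp z hz)⟩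

lemma IsSep.symm (h : IsSep G s t S) : IsSep G t s S :=
  ⟨h.2.1, h.1, fun h' => h.2.2 h'.symm⟩

lemma IsMinSep.symm (h : IsMinSep G s t S) : IsMinSep G t s S :=
  ⟨h.1.symm, fun S' hS' hsep => h.2 S' hS' hsep.symm⟩

lemma IsSep.disjoint_compOf (h : IsSep G s t S) : Disjoint (compOf G S s) (compOf G S t) :=
  Set.disjoint_left.2 fun _ hs ht => h.2.2 (hs.trans ht.symm)

lemma IsMinSep.subset_nbhd_compOf (hT : IsMinSep G s t T) : T ⊆ nbhd G (compOf G T t) := by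
  intro u hu
  have hnot : ¬ IsSep G s t (T \ {u}) := hT.2 _ (Set.sdiff_singleton_ssubset.2 hu)
  simp only [IsSep, Set.mem_sdiff, hT.1.1, hT.1.2.1, false_and, not_false_eq_true, true_and,
    not_not] at hnot
  obtain ⟨p, hp⟩ := hnot
  have hs : s ∉ compOf G T t := hT.1.disjoint_compOf.notMem_of_mem_left (self_mem_compOf hT.1.1)
  obtain ⟨d, hd, hd₁, hd₂⟩ := p.reverse.exists_boundary_dart _ (self_mem_compOf hT.1.2.1) hs
  have hdT : d.snd ∈ T := by
    by_contra hdT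
    exact hd₂ (mem_compOf_of_adj hd₁ d.adj hdT)
  have hdu : d.snd = u := by
    by_contra hdu
    have hmem := p.reverse.dart_snd_mem_support_of_mem_darts hd
    exact hp d.snd (by simpa using hmem) ⟨hdT, hdu⟩
  exact hdu ▸ ⟨hd₂, d.fst, hd₁, d.adj⟩

lemma IsMinSep.nbhd_compOf_eq (hT : IsMinSep G s t T) : nbhd G (compOf G T s) = T :=
  nbhd_compOf_subset.antisymm hT.symm.subset_nbhd_compOf

lemma isMinSep_of_subset_nbhd (hS : IsSep G s t S) (hSs : S ⊆ nbhd G (compOf G S s))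
    (hSt : S ⊆ nbhd G (compOf G S t)) : IsMinSep G s t S := by
  refine ⟨hS, fun S' hS' hsep => ?_⟩
  obtain ⟨v, hvS, hvS'⟩ := Set.exists_of_ssubset hS'
  obtain ⟨-, a, ha, hav⟩ := hSs hvS
  obtain ⟨-, b, hb, hbv⟩ := hSt hvS
  have hvs : v ∈ compOf G S' s := mem_compOf_of_adj (compOf_anti hS'.subset ha) hav hvS'
  have hbs : b ∈ compOf G S' s :=
    mem_compOf_of_adj hvs hbv.symm fun h => notMem_of_mem_compOf hb (hS'.subset h)
  exact hsep.2.2 (hbs.trans (compOf_anti hS'.subset hb).symm)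

/-- A vertex of `T` in `C_s(G − S)` would have a neighbour in `C_t(G − T)`, which misses `S`,
so `S` would not separate `s` from `t`. -/
lemma IsSep.compOf_subset_compOf (hS : IsSep G s t S) (hT : IsMinSep G s t T)
    (hST : S \ T ⊆ compOf G T s) : compOf G S s ⊆ compOf G T s := by
  have htS : Disjoint (compOf G T t) S := Set.disjoint_left.2 fun x hxt hxS =>
    hT.1.disjoint_compOf.notMem_of_mem_right hxt (hST ⟨hxS, notMem_of_mem_compOf hxt⟩)
  refine compOf_subset_compOf_of_disjoint (Set.disjoint_left.2 fun u hu huT => ?_)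
  obtain ⟨-, v, hv, hvu⟩ := hT.subset_nbhd_compOf huT
  have hvs : v ∈ compOf G S s := mem_compOf_of_adj hu hvu.symm (htS.notMem_of_mem_left hv)
  exact hS.2.2 (hvs.trans (compOf_subset_compOf_of_disjoint htS hv).symm)

lemma existsUnique_closeTo_of_isLeast {A : Set V} (hS : IsMinSep G s t S)
    (hAS : A ⊆ compOf G S s)
    (hleast : ∀ T, IsMinSep G s t T → A ⊆ compOf G T s → compOf G S s ⊆ compOf G T s) :
    ∃! S, CloseTo G s t A S := by
  refine ⟨S, ⟨hS, hAS, fun T hT hTS hAT hsub => hTS ?_⟩, fun S' ⟨hS', hAS', hclose⟩ => ?_⟩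
  · rw [← hT.nbhd_compOf_eq, ← hS.nbhd_compOf_eq, hsub.antisymm (hleast T hT hAT)]
  · by_contra hne
    exact hclose S hS (Ne.symm hne) hAS (hleast S' hS' hAS')

end Separators

section ClosestSep

variable {G : SimpleGraph V} {X T : Set V} {s t : V}

def closestSep (G : SimpleGraph V) (X : Set V) (t : V) : Set V :=
  nbhd G (compOf G (nbhd G X) t)

lemma closestSep_subset_nbhd : closestSep G X t ⊆ nbhd G X :=
  nbhd_compOf_subset

lemma disjoint_closestSep : Disjoint X (closestSep G X t) :=
  Set.disjoint_left.2 fun _ hx h => (closestSep_subset_nbhd h).1 hx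

lemma isSep_closestSep (hs : s ∈ X) (ht : t ∉ X) (htN : t ∉ nbhd G X) :
    IsSep G s t (closestSep G X t) := by
  have htD : t ∈ compOf G (nbhd G X) t := self_mem_compOf htN
  have hsD : s ∉ compOf G (nbhd G X) t := fun h => not_reachAvoid_nbhd hs ht h.symm
  exact ⟨disjoint_closestSep.notMem_of_mem_left hs, fun h => htN (closestSep_subset_nbhd h),
    fun h => not_reachAvoid_nbhd htD hsD h.symm⟩

lemma isMinSep_closestSep (hs : s ∈ X) (ht : t ∉ X) (htN : t ∉ nbhd G X) (hX : ConnIn G X) :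
    IsMinSep G s t (closestSep G X t) := by
  have hXs : X ⊆ compOf G (closestSep G X t) s := hX.subset_compOf hs disjoint_closestSep
  have hDt : compOf G (nbhd G X) t ⊆ compOf G (closestSep G X t) t :=
    compOf_subset_compOf_of_disjoint <| Set.disjoint_left.2 fun _ hx hxS =>
      notMem_of_mem_compOf hx (closestSep_subset_nbhd hxS)
  refine isMinSep_of_subset_nbhd (isSep_closestSep hs ht htN) (fun v hv => ?_) (fun v hv => ?_)
  · obtain ⟨-, x, hx, hxv⟩ := closestSep_subset_nbhd hv
    exact mem_nbhd_compOf (hXs hx) hxv hv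
  · let ⟨_, d, hd, hdv⟩ := hv
    exact mem_nbhd_compOf (hDt hd) hdv hv

lemma compOf_closestSep_subset (hs : s ∈ X) (ht : t ∉ X) (htN : t ∉ nbhd G X)
    (hT : IsMinSep G s t T) (hXT : X ⊆ compOf G T s) :
    compOf G (closestSep G X t) s ⊆ compOf G T s := by
  refine (isSep_closestSep hs ht htN).compOf_subset_compOf hT fun v ⟨hv, hvT⟩ => ?_
  obtain ⟨-, x, hx, hxv⟩ := closestSep_subset_nbhd hv
  exact mem_compOf_of_adj (hXT hx) hxv hvT

end ClosestSep

theorem stmt4_general (G : SimpleGraph V) (s t : V) (A : Set V)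
    (hconnA : ConnIn G (insert s A))
    (hAt : insert s A ∩ clNbhd G t = ∅) :
    ∃! S : Set V, CloseTo G s t A S := by
  have hs : s ∈ insert s A := Set.mem_insert s A
  have ht : t ∉ insert s A := fun h => hAt.subset ⟨h, Set.mem_insert t _⟩
  have htN : t ∉ nbhd G (insert s A) := fun ⟨_, x, hx, hxt⟩ =>
    hAt.subset ⟨hx, Set.mem_insert_of_mem t hxt.symm⟩
  exact existsUnique_closeTo_of_isLeast (isMinSep_closestSep hs ht htN hconnA)
    ((Set.subset_insert s A).trans (hconnA.subset_compOf hs disjoint_closestSep))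
    fun T hT hAT => compOf_closestSep_subset hs ht htN hT
      (Set.insert_subset (self_mem_compOf hT.1.1) hAT)

theorem stmt4 (G : SimpleGraph V) (hconn : G.Connected) (s t : V)
    (hst : s ≠ t) (hadj : ¬ G.Adj s t) (A : Set V)
    (hsA : s ∉ A) (htA : t ∉ A)
    (hconnA : ConnIn G (insert s A))
    (hAt : insert s A ∩ clNbhd G t = ∅) :
    ∃! S : Set V, CloseTo G s t A S :=
  stmt4_general G s t A hconnA hAt
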